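/- arXiv:2305.02377 — 2 statements merged into one kernel-verified Lean document; each statement's English description precedes it below -/
import Mathlib

section
/- Let n ≥ 2 and let (X_t)_{t≥1} be an i.i.d. sequence of random variables, each uniformly distributed on the 2-element subsets of Fin n. Fix an agent a ∈ Fin n and let T be the least t such that a ∈ X_t. Then the probability of the event {T < ∞ and for all s < T, X_s ∩ X_T = ∅} equals (n−1)/(2n−3), which is strictly greater than 1/2. -/
open MeasureTheory ProbabilityTheory Finset
open scoped ENNReal

/-!
Let `T` be the first visit of `a` and `p = X_T`. The event holds iff `X_1, …, X_{T-1}` all avoid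
`p`, so it is the union, over `T = t + 1` and the `n - 1` pairs `p ∋ a`, of cylinder events of
probability `dᵗ / κ`, where `κ = C(n, 2)` and `d = C(n-2, 2) / κ`; summing gives
`(n - 1) / (κ (1 - d)) = (n - 1) / (2n - 3)`. Up to the null event that `a` never interacts, the
complement is the union of the cylinders in which some `X_u`, `u < T`, is the first pair meeting
`p`; these have total mass `(n - 2) / (2n - 3)`.

The `X t` are not assumed measurable, so only subadditivity of `P` is available: the two union
bounds, one for the event and one for its complement, add up to `1`, which forces equality.
-/

section Subadditivity

variable {Ω : Type*} [MeasurableSpace Ω] {P : Measure Ω}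

lemma measure_eq_of_le_of_compl_le [IsProbabilityMeasure P] {S : Set Ω} {p q : ℝ≥0∞}
    (hS : P S ≤ p) (hSc : P Sᶜ ≤ q) (hpq : p + q = 1) : P S = p := by
  have hq : q ≠ ⊤ := ne_top_of_le_ne_top ENNReal.one_ne_top (hpq ▸ le_add_self)
  refine le_antisymm hS ?_
  have hcover : 1 ≤ P S + q := calc
    1 = P (S ∪ Sᶜ) := by rw [Set.union_compl_self, measure_univ]
    _ ≤ P S + P Sᶜ := measure_union_le _ _
    _ ≤ P S + q := by gcongr
  calc p = 1 - q := ENNReal.eq_sub_of_add_eq hq hpq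
    _ ≤ P S := tsub_le_iff_right.2 hcover

variable {β : Type*} {Y : Ω → β} {U : Finset β} {w : β → ℝ≥0∞}

lemma measure_mem_finset_le_sum (hw : ∀ s ∈ U, P {ω | Y ω = s} = w s) {F : Finset β}
    (hF : F ⊆ U) : P {ω | Y ω ∈ F} ≤ ∑ s ∈ F, w s := calc
  P {ω | Y ω ∈ F} = P (⋃ s ∈ F, {ω | Y ω = s}) := by congr 1; ext; simp
  _ ≤ ∑ s ∈ F, P {ω | Y ω = s} := measure_biUnion_finset_le _ _
  _ = ∑ s ∈ F, w s := sum_congr rfl fun s hs => hw s (hF hs)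

lemma measure_mem_finset_eq_sum [IsProbabilityMeasure P] (hY : ∀ ω, Y ω ∈ U)
    (hw : ∀ s ∈ U, P {ω | Y ω = s} = w s) (hsum : ∑ s ∈ U, w s = 1) {F : Finset β} (hF : F ⊆ U) :
    P {ω | Y ω ∈ F} = ∑ s ∈ F, w s := by
  classical
  refine measure_eq_of_le_of_compl_le (measure_mem_finset_le_sum hw hF)
    (q := ∑ s ∈ U \ F, w s) ?_ (by rw [add_comm, sum_sdiff hF, hsum])
  calc P {ω | Y ω ∈ F}ᶜ ≤ P {ω | Y ω ∈ U \ F} :=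
        measure_mono fun ω hω => mem_sdiff.2 ⟨hY ω, hω⟩
    _ ≤ ∑ s ∈ U \ F, w s := measure_mem_finset_le_sum hw sdiff_subset

end Subadditivity

section Cylinder

variable {β : Type*}

def seqCylinder (L : List (Finset β)) : Set (ℕ → β) :=
  {x | ∀ i : Fin L.length, x (i + 1) ∈ L[i]}

lemma mem_seqCylinder_nil (x : ℕ → β) : x ∈ seqCylinder [] := fun i => i.elim0

lemma mem_seqCylinder_append {x : ℕ → β} {L₁ L₂ : List (Finset β)} :
    x ∈ seqCylinder (L₁ ++ L₂) ↔
      x ∈ seqCylinder L₁ ∧ (fun t => x (L₁.length + t)) ∈ seqCylinder L₂ := by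
  simp only [seqCylinder, Set.mem_ofPred_eq]
  constructor
  · intro h
    refine ⟨fun i => ?_, fun i => ?_⟩
    · simpa [List.getElem_append_left i.2] using h ⟨i, by simp; omega⟩
    · simpa [List.getElem_append_right, Nat.add_assoc] using
        h ⟨L₁.length + i, by simp⟩
  · rintro ⟨h₁, h₂⟩ ⟨i, hi⟩
    by_cases hi₁ : i < L₁.length
    · simpa [List.getElem_append_left hi₁] using h₁ ⟨i, hi₁⟩
    · obtain ⟨j, rfl⟩ := Nat.exists_eq_add_of_le (not_lt.1 hi₁)
      simpa [Nat.add_assoc] using h₂ ⟨j, by simp at hi; omega⟩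

lemma mem_seqCylinder_cons {x : ℕ → β} {F : Finset β} {L : List (Finset β)} :
    x ∈ seqCylinder (F :: L) ↔ x 1 ∈ F ∧ (fun t => x (1 + t)) ∈ seqCylinder L := by
  rw [← List.singleton_append, mem_seqCylinder_append]
  simp [seqCylinder]

lemma mem_seqCylinder_replicate {x : ℕ → β} {t : ℕ} {F : Finset β} :
    x ∈ seqCylinder (List.replicate t F) ↔ ∀ i, 1 ≤ i → i ≤ t → x i ∈ F := by
  simp only [seqCylinder, Set.mem_ofPred_eq, Fin.getElem_fin, List.getElem_replicate]
  constructor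
  · intro h i hi₁ hit
    obtain ⟨j, rfl⟩ := Nat.exists_eq_add_of_le' hi₁
    exact h ⟨j, by simp; omega⟩
  · exact fun h i => h _ (by omega) (by have := i.2; simp at this; omega)

variable [MeasurableSpace β] [MeasurableSingletonClass β]
  {Ω : Type*} [MeasurableSpace Ω] {P : Measure Ω} {X : ℕ → Ω → β}

lemma measure_seqCylinder (hX : iIndepFun X P) {ν : Finset β → ℝ≥0∞} {L : List (Finset β)}
    (hν : ∀ F ∈ L, ∀ t, P {ω | X t ω ∈ F} = ν F) :
    P {ω | (fun t => X t ω) ∈ seqCylinder L} = (L.map ν).prod := by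
  have hind : iIndepFun (fun i : Fin L.length => X (i + 1)) P :=
    hX.precomp fun i j h => Fin.ext (by simpa using h)
  have hset : {ω | (fun t => X t ω) ∈ seqCylinder L} =
      ⋂ i ∈ (univ : Finset (Fin L.length)), X (i + 1) ⁻¹' (L[i] : Set β) := by
    ext; simp [seqCylinder]
  rw [hset, hind.measure_inter_preimage_eq_mul _ fun i _ => L[i].measurableSet,
    ← Fin.prod_univ_fun_getElem]
  exact prod_congr rfl fun i _ => hν _ (List.getElem_mem _) _

end Cylinder

section Pairs

variable {α : Type*} [Fintype α] [DecidableEq α]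

def pairsThrough (a : α) : Finset (Finset α) := (univ.erase a).image fun b => {a, b}

def pairsAvoiding (s : Finset α) : Finset (Finset α) := (univ \ s).powersetCard 2

lemma mem_pairsThrough {a : α} {p : Finset α} : p ∈ pairsThrough a ↔ #p = 2 ∧ a ∈ p := by
  simp only [pairsThrough, mem_image, mem_erase, mem_univ, and_true]
  constructor
  · rintro ⟨b, hba, rfl⟩
    exact ⟨card_pair (Ne.symm hba), mem_insert_self _ _⟩
  · rintro ⟨hp, hap⟩
    obtain ⟨b, hb⟩ := card_eq_one.1 (by rw [card_erase_of_mem hap, hp])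
    refine ⟨b, ne_of_mem_erase (hb ▸ mem_singleton_self b), ?_⟩
    rw [← hb, insert_erase hap]

lemma card_pairsThrough (a : α) : #(pairsThrough a) = Fintype.card α - 1 := by
  rw [pairsThrough, card_image_of_injOn, card_erase_of_mem (mem_univ a), card_univ]
  intro b hb c hc h
  have hb' : b ∈ ({a, c} : Finset α) := by
    rw [← show ({a, b} : Finset α) = {a, c} from h]; simp
  simpa [ne_of_mem_erase hb] using hb'

lemma mem_pairsAvoiding {s q : Finset α} : q ∈ pairsAvoiding s ↔ #q = 2 ∧ Disjoint q s := by
  simp [pairsAvoiding, mem_powersetCard, subset_sdiff, and_comm]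

lemma card_pairsAvoiding (s : Finset α) :
    #(pairsAvoiding s) = (Fintype.card α - #s).choose 2 := by
  rw [pairsAvoiding, card_powersetCard, card_univ_sdiff]

lemma pairsAvoiding_anti {s t : Finset α} (h : s ⊆ t) : pairsAvoiding t ⊆ pairsAvoiding s :=
  powersetCard_mono (sdiff_subset_sdiff subset_rfl h)

lemma card_pairsAvoiding_singleton_sdiff {a : α} {p : Finset α} (hp : p ∈ pairsThrough a) :
    #(pairsAvoiding {a} \ pairsAvoiding p) = Fintype.card α - 2 := by
  obtain ⟨hp2, hap⟩ := mem_pairsThrough.1 hp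
  obtain ⟨m, hm⟩ : ∃ m, Fintype.card α = m + 2 :=
    ⟨_, (Nat.sub_add_cancel (hp2 ▸ card_le_univ p)).symm⟩
  rw [card_sdiff_of_subset (pairsAvoiding_anti (singleton_subset_iff.2 hap)), card_pairsAvoiding,
    card_pairsAvoiding, card_singleton, hp2, hm]
  simp [Nat.choose_succ_succ']

end Pairs

section Paths

variable {α : Type*}

noncomputable def firstVisit (a : α) (x : ℕ → Finset α) : ℕ := sInf {t | 1 ≤ t ∧ a ∈ x t}

lemma notMem_of_lt_firstVisit {a : α} {x : ℕ → Finset α} {i : ℕ} (hi : 1 ≤ i)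
    (h : i < firstVisit a x) : a ∉ x i :=
  fun ha => Nat.notMem_of_lt_sInf h ⟨hi, ha⟩

variable [Fintype α] [DecidableEq α]

def FirstPartnerFresh (a : α) (x : ℕ → Finset α) : Prop :=
  (∃ t, 1 ≤ t ∧ a ∈ x t) ∧ ∀ s, 1 ≤ s → s < firstVisit a x → x s ∩ x (firstVisit a x) = ∅

def freshList (p : Finset α) (t : ℕ) : List (Finset (Finset α)) :=
  List.replicate t (pairsAvoiding p) ++ [{p}]

/-- `u + 1` is the first step whose pair meets `p`; `u + k + 2` is the first visit of `a`. -/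
def staleList (a : α) (p : Finset α) (u k : ℕ) : List (Finset (Finset α)) :=
  List.replicate u (pairsAvoiding p) ++
    (pairsAvoiding {a} \ pairsAvoiding p) :: (List.replicate k (pairsAvoiding {a}) ++ [{p}])

variable {a : α} {x : ℕ → Finset α}

lemma mem_seqCylinder_freshList {p : Finset α} {t : ℕ} :
    x ∈ seqCylinder (freshList p t) ↔
      (∀ i, 1 ≤ i → i ≤ t → #(x i) = 2 ∧ Disjoint (x i) p) ∧ x (t + 1) = p := by
  simp [freshList, mem_seqCylinder_append, mem_seqCylinder_cons, mem_seqCylinder_replicate,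
    mem_seqCylinder_nil, mem_pairsAvoiding, and_comm]

lemma mem_seqCylinder_staleList {p : Finset α} {u k : ℕ} :
    x ∈ seqCylinder (staleList a p u k) ↔
      (∀ i, 1 ≤ i → i ≤ u → #(x i) = 2 ∧ Disjoint (x i) p) ∧
      (#(x (u + 1)) = 2 ∧ a ∉ x (u + 1) ∧ ¬Disjoint (x (u + 1)) p) ∧
      (∀ i, 1 ≤ i → i ≤ k → #(x (u + 1 + i)) = 2 ∧ a ∉ x (u + 1 + i)) ∧
      x (u + k + 2) = p := by
  simp only [staleList, mem_seqCylinder_append, mem_seqCylinder_cons, mem_seqCylinder_replicate,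
    mem_seqCylinder_nil, mem_pairsAvoiding, mem_sdiff, mem_singleton, disjoint_singleton_right,
    List.length_replicate, Nat.add_assoc, not_and, and_true]
  rw [show 1 + (k + 1) = k + 2 by omega]
  tauto

variable (hx : ∀ t, #(x t) = 2)
include hx

lemma FirstPartnerFresh.exists_mem_seqCylinder (h : FirstPartnerFresh a x) :
    ∃ t, ∃ p ∈ pairsThrough a, x ∈ seqCylinder (freshList p t) := by
  obtain ⟨hvisit, hdisj⟩ := h
  obtain ⟨hT, haT⟩ : 1 ≤ firstVisit a x ∧ a ∈ x (firstVisit a x) := Nat.sInf_mem hvisit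
  refine ⟨firstVisit a x - 1, x (firstVisit a x), mem_pairsThrough.2 ⟨hx _, haT⟩,
    mem_seqCylinder_freshList.2 ⟨fun i hi hit => ⟨hx i, ?_⟩, by rw [Nat.sub_add_cancel hT]⟩⟩
  exact disjoint_iff_inter_eq_empty.2 (hdisj i hi (by omega))

lemma not_firstPartnerFresh_cases (h : ¬FirstPartnerFresh a x) :
    (∀ t, 1 ≤ t → a ∉ x t) ∨
      ∃ u k, ∃ p ∈ pairsThrough a, x ∈ seqCylinder (staleList a p u k) := by
  by_cases hvisit : ∃ t, 1 ≤ t ∧ a ∈ x t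
  swap
  · exact .inl fun t ht ha => hvisit ⟨t, ht, ha⟩
  right
  set T := firstVisit a x
  obtain ⟨hT, haT⟩ : 1 ≤ T ∧ a ∈ x T := Nat.sInf_mem hvisit
  have hmeet : ∃ s, 1 ≤ s ∧ s < T ∧ ¬Disjoint (x s) (x T) := by
    simpa [FirstPartnerFresh, hvisit, disjoint_iff_inter_eq_empty] using h
  obtain ⟨hs, hsT, hsmeet⟩ := Nat.find_spec hmeet
  set s := Nat.find hmeet
  have hbefore : ∀ i, 1 ≤ i → i < s → Disjoint (x i) (x T) := fun i hi his => by
    by_contra hne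
    exact Nat.find_min hmeet his ⟨hi, by omega, hne⟩
  refine ⟨s - 1, T - s - 1, x T, mem_pairsThrough.2 ⟨hx T, haT⟩,
    mem_seqCylinder_staleList.2 ⟨fun i hi his => ⟨hx i, hbefore i hi (by omega)⟩, ?_,
      fun i hi hik => ⟨hx _, notMem_of_lt_firstVisit (by omega) (by omega)⟩, by congr 1; omega⟩⟩
  rw [Nat.sub_add_cancel hs]
  exact ⟨hx s, notMem_of_lt_firstVisit hs hsT, hsmeet⟩

end Paths

lemma ENNReal.tsum_geometric_natCast_div {a b c : ℕ} (habc : a + c = b) (hc : c ≠ 0) :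
    ∑' t : ℕ, ((a : ℝ≥0∞) / b) ^ t = b / c := by
  have hb : (b : ℝ≥0∞) ≠ 0 := by exact_mod_cast (show b ≠ 0 by omega)
  have hsub : 1 - (a : ℝ≥0∞) / b = c / b := by
    refine ENNReal.sub_eq_of_eq_add (by simp [ENNReal.div_eq_top, hb]) ?_
    rw [ENNReal.div_add_div_same, ← Nat.cast_add, add_comm, habc, ENNReal.div_self hb (by simp)]
  rw [ENNReal.tsum_geometric, hsub, ENNReal.inv_div (by simp) (by simp [hc])]

lemma choose_two_add_two (m : ℕ) : m.choose 2 + (2 * m + 1) = (m + 2).choose 2 := by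
  simp [Nat.choose_succ_succ', Nat.choose_one_right]; ring

lemma choose_two_add_one (m : ℕ) : (m + 1).choose 2 + (m + 1) = (m + 2).choose 2 := by
  simp [Nat.choose_succ_succ', Nat.choose_one_right]; ring

lemma tsum_freshList_mass (m : ℕ) :
    ∑' t : ℕ, ((m : ℝ≥0∞) + 1) * ((m.choose 2 / (m + 2).choose 2 : ℝ≥0∞) ^ t *
      ((m + 2).choose 2 : ℝ≥0∞)⁻¹) = (m + 1) / (2 * m + 1) := by
  have hκ : ((m + 2).choose 2 : ℝ≥0∞) ≠ 0 := by simp [Nat.choose_eq_zero_iff]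
  rw [ENNReal.tsum_mul_left, ENNReal.tsum_mul_right,
    ENNReal.tsum_geometric_natCast_div (choose_two_add_two m) (by omega)]
  rw [div_eq_mul_inv, mul_right_comm, ENNReal.mul_inv_cancel hκ (by simp), one_mul]
  push_cast
  rw [div_eq_mul_inv]

lemma tsum_staleList_mass (m : ℕ) :
    ∑' u : ℕ, ∑' k : ℕ, ((m : ℝ≥0∞) + 1) * ((m.choose 2 / (m + 2).choose 2 : ℝ≥0∞) ^ u *
      ((m / (m + 2).choose 2 : ℝ≥0∞) * (((m + 1).choose 2 / (m + 2).choose 2 : ℝ≥0∞) ^ k *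
      ((m + 2).choose 2 : ℝ≥0∞)⁻¹))) = m / (2 * m + 1) := by
  set κ : ℝ≥0∞ := ↑((m + 2).choose 2)
  have hκ : κ ≠ 0 := by simp [κ, Nat.choose_eq_zero_iff]
  have hκ' : κ ≠ ⊤ := by simp [κ]
  have hm : (m : ℝ≥0∞) + 1 ≠ 0 := by simp
  calc _ = ∑' u : ℕ, ∑' k : ℕ, ((m : ℝ≥0∞) + 1) * (m / κ) * κ⁻¹ *
        (m.choose 2 / κ : ℝ≥0∞) ^ u * (((m + 1).choose 2 / κ : ℝ≥0∞) ^ k) :=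
        tsum_congr fun u => tsum_congr fun k => by ring
    _ = ((m : ℝ≥0∞) + 1) * (m / κ) * κ⁻¹ * (κ / (2 * m + 1 : ℕ)) * (κ / (m + 1 : ℕ)) := by
        simp_rw [ENNReal.tsum_mul_left, ENNReal.tsum_mul_right]
        rw [ENNReal.tsum_mul_left,
          ENNReal.tsum_geometric_natCast_div (choose_two_add_two m) (by omega),
          ENNReal.tsum_geometric_natCast_div (choose_two_add_one m) (by omega)]
    _ = m / (2 * m + 1) * (κ * κ⁻¹) * (κ * κ⁻¹) * (((m : ℝ≥0∞) + 1) * ((m : ℝ≥0∞) + 1)⁻¹) := by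
        push_cast
        simp only [div_eq_mul_inv]
        ring
    _ = m / (2 * m + 1) := by
        rw [ENNReal.mul_inv_cancel hκ hκ', ENNReal.mul_inv_cancel hm (by simp)]
        simp

lemma natCast_add_two_sub_one_div (m : ℕ) :
    (((m + 2 : ℕ) : ℝ≥0∞) - 1) / (2 * ((m + 2 : ℕ) : ℝ≥0∞) - 3) = (m + 1) / (2 * m + 1) := by
  have h1 : ((m + 2 : ℕ) : ℝ≥0∞) - 1 = m + 1 := by
    rw [show ((m + 2 : ℕ) : ℝ≥0∞) = (m + 1) + 1 by push_cast; ring,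
      ENNReal.add_sub_cancel_right ENNReal.one_ne_top]
  have h2 : 2 * ((m + 2 : ℕ) : ℝ≥0∞) - 3 = 2 * m + 1 := by
    rw [show 2 * ((m + 2 : ℕ) : ℝ≥0∞) = (2 * m + 1) + 3 by push_cast; ring,
      ENNReal.add_sub_cancel_right (by simp)]
  rw [h1, h2]

lemma succ_div_add_div_eq_one (m : ℕ) :
    ((m : ℝ≥0∞) + 1) / (2 * m + 1) + m / (2 * m + 1) = 1 := by
  rw [ENNReal.div_add_div_same, show (m : ℝ≥0∞) + 1 + m = 2 * m + 1 by ring,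
    ENNReal.div_self (by simp) (by simp [ENNReal.mul_eq_top])]

lemma half_lt_succ_div (m : ℕ) : 1 / 2 < ((m : ℝ≥0∞) + 1) / (2 * m + 1) := by
  rw [ENNReal.lt_div_iff_mul_lt (by simp) (by simp [ENNReal.mul_eq_top]), one_div, mul_comm,
    ← div_eq_mul_inv, ENNReal.div_lt_iff (by simp) (by simp)]
  calc 2 * (m : ℝ≥0∞) + 1 < 2 * m + 2 :=
        ENNReal.add_lt_add_left (by simp [ENNReal.mul_eq_top]) (by norm_num)
    _ = (m + 1) * 2 := by ring

section UniformScheduler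

variable {α : Type*} [Fintype α] {Ω : Type*} [MeasurableSpace Ω] {P : Measure Ω}
  [IsProbabilityMeasure P] {X : ℕ → Ω → Finset α}

lemma measure_mem_eq_card_div (hcard : ∀ t ω, #(X t ω) = 2)
    (hunif : ∀ t (s : Finset α), #s = 2 →
      P {ω | X t ω = s} = 1 / ((Fintype.card α).choose 2 : ℝ≥0∞))
    {F : Finset (Finset α)} (hF : ∀ q ∈ F, #q = 2) (t : ℕ) :
    P {ω | X t ω ∈ F} = #F / ((Fintype.card α).choose 2 : ℝ≥0∞) := by
  obtain ⟨ω⟩ := nonempty_of_isProbabilityMeasure P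
  have hκ : ((Fintype.card α).choose 2 : ℝ≥0∞) ≠ 0 := by
    rw [Nat.cast_ne_zero, ← card_univ, ← card_powersetCard, ← pos_iff_ne_zero, card_pos]
    exact ⟨_, mem_powersetCard_univ.2 (hcard t ω)⟩
  rw [measure_mem_finset_eq_sum (U := powersetCard 2 univ)
    (fun ω => mem_powersetCard_univ.2 (hcard t ω))
    (fun s hs => hunif t s (mem_powersetCard_univ.1 hs)) ?_
    (fun q hq => mem_powersetCard_univ.2 (hF q hq)), sum_const, nsmul_eq_mul, mul_one_div]
  rw [sum_const, card_powersetCard, card_univ, nsmul_eq_mul, mul_one_div,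
    ENNReal.div_self hκ (ENNReal.natCast_ne_top _)]

variable [MeasurableSpace (Finset α)] [MeasurableSingletonClass (Finset α)]
  (hiid : iIndepFun X P) (hcard : ∀ t ω, #(X t ω) = 2)
  (hunif : ∀ t (s : Finset α), #s = 2 →
    P {ω | X t ω = s} = 1 / ((Fintype.card α).choose 2 : ℝ≥0∞))
include hiid hcard hunif

lemma measure_seqCylinder_eq_prod_card_div {L : List (Finset (Finset α))}
    (hL : ∀ F ∈ L, ∀ q ∈ F, #q = 2) :
    P {ω | (fun t => X t ω) ∈ seqCylinder L} =
      (L.map fun F => (#F : ℝ≥0∞) / (Fintype.card α).choose 2).prod :=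
  measure_seqCylinder hiid fun F hF => measure_mem_eq_card_div hcard hunif (hL F hF)

variable [DecidableEq α] {m : ℕ} (hα : Fintype.card α = m + 2) (a : α)
include hα

lemma measure_seqCylinder_freshList {p : Finset α} (hp : p ∈ pairsThrough a) (t : ℕ) :
    P {ω | (fun t => X t ω) ∈ seqCylinder (freshList p t)} =
      (m.choose 2 / (m + 2).choose 2 : ℝ≥0∞) ^ t * ((m + 2).choose 2 : ℝ≥0∞)⁻¹ := by
  have hp2 := (mem_pairsThrough.1 hp).1
  rw [measure_seqCylinder_eq_prod_card_div hiid hcard hunif]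
  · simp [freshList, card_pairsAvoiding, hα, hp2]
  · simp only [freshList, List.mem_append, List.mem_replicate, List.mem_singleton]
    rintro F (⟨-, rfl⟩ | rfl) q hq
    · exact (mem_pairsAvoiding.1 hq).1
    · rwa [mem_singleton.1 hq]

lemma measure_seqCylinder_staleList {p : Finset α} (hp : p ∈ pairsThrough a) (u k : ℕ) :
    P {ω | (fun t => X t ω) ∈ seqCylinder (staleList a p u k)} =
      (m.choose 2 / (m + 2).choose 2 : ℝ≥0∞) ^ u *
        ((m / (m + 2).choose 2 : ℝ≥0∞) * (((m + 1).choose 2 / (m + 2).choose 2 : ℝ≥0∞) ^ k *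
          ((m + 2).choose 2 : ℝ≥0∞)⁻¹)) := by
  have hp2 := (mem_pairsThrough.1 hp).1
  rw [measure_seqCylinder_eq_prod_card_div hiid hcard hunif]
  · simp [staleList, card_pairsAvoiding, card_pairsAvoiding_singleton_sdiff hp, hα, hp2]
  · simp only [staleList, List.mem_append, List.mem_replicate, List.mem_cons, List.not_mem_nil,
      or_false]
    rintro F (⟨-, rfl⟩ | rfl | ⟨-, rfl⟩ | rfl) q hq
    · exact (mem_pairsAvoiding.1 hq).1
    · exact (mem_pairsAvoiding.1 (mem_sdiff.1 hq).1).1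
    · exact (mem_pairsAvoiding.1 hq).1
    · rwa [mem_singleton.1 hq]

lemma measure_forall_notMem_eq_zero : P {ω | ∀ t, 1 ≤ t → a ∉ X t ω} = 0 := by
  have hK : ∀ K, P {ω | ∀ t, 1 ≤ t → a ∉ X t ω} ≤
      ((m + 1).choose 2 / (m + 2).choose 2 : ℝ≥0∞) ^ K := fun K => calc
    _ ≤ P {ω | (fun t => X t ω) ∈ seqCylinder (List.replicate K (pairsAvoiding {a}))} :=
        measure_mono fun ω (h : ∀ t, 1 ≤ t → a ∉ X t ω) =>
          mem_seqCylinder_replicate.2 fun i hi _ =>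
            mem_pairsAvoiding.2 ⟨hcard i ω, disjoint_singleton_right.2 (h i hi)⟩
    _ = _ := by
        rw [measure_seqCylinder_eq_prod_card_div hiid hcard hunif]
        · simp [card_pairsAvoiding, hα]
        · simp only [List.mem_replicate]
          rintro F ⟨-, rfl⟩ q hq
          exact (mem_pairsAvoiding.1 hq).1
  have hlt : ((m + 1).choose 2 / (m + 2).choose 2 : ℝ≥0∞) < 1 :=
    ENNReal.div_lt_of_lt_mul (by rw [one_mul, ← choose_two_add_one]; exact_mod_cast (by omega))
  exact le_antisymm (ge_of_tendsto' (ENNReal.tendsto_pow_atTop_nhds_zero_of_lt_one hlt) hK)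
    bot_le

lemma measure_firstPartnerFresh_le :
    P {ω | FirstPartnerFresh a (fun t => X t ω)} ≤ (m + 1) / (2 * m + 1) := calc
  _ ≤ P (⋃ t, ⋃ p ∈ pairsThrough a, {ω | (fun t => X t ω) ∈ seqCylinder (freshList p t)}) :=
      measure_mono fun ω h => by simpa using h.exists_mem_seqCylinder (hcard · ω)
  _ ≤ ∑' t, ∑ p ∈ pairsThrough a, P {ω | (fun t => X t ω) ∈ seqCylinder (freshList p t)} :=
      (measure_iUnion_le _).trans (ENNReal.tsum_le_tsum fun t => measure_biUnion_finset_le _ _)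
  _ = (m + 1) / (2 * m + 1) := by
      simpa [sum_congr rfl fun p hp => measure_seqCylinder_freshList hiid hcard hunif hα a hp _,
        card_pairsThrough, hα] using tsum_freshList_mass m

lemma measure_compl_firstPartnerFresh_le :
    P {ω | FirstPartnerFresh a (fun t => X t ω)}ᶜ ≤ m / (2 * m + 1) := calc
  _ ≤ P ({ω | ∀ t, 1 ≤ t → a ∉ X t ω} ∪ ⋃ u, ⋃ k, ⋃ p ∈ pairsThrough a,
        {ω | (fun t => X t ω) ∈ seqCylinder (staleList a p u k)}) := by
      refine measure_mono fun ω h => ?_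
      rcases not_firstPartnerFresh_cases (hcard · ω) h with h | ⟨u, k, p, hp, h⟩
      · exact .inl h
      · exact .inr (by simp only [Set.mem_iUnion]; exact ⟨u, k, p, hp, h⟩)
  _ ≤ 0 + ∑' u, ∑' k, ∑ p ∈ pairsThrough a,
        P {ω | (fun t => X t ω) ∈ seqCylinder (staleList a p u k)} := by
      refine (measure_union_le _ _).trans (add_le_add
        (measure_forall_notMem_eq_zero hiid hcard hunif hα a).le ?_)
      exact (measure_iUnion_le _).trans (ENNReal.tsum_le_tsum fun u =>
        (measure_iUnion_le _).trans (ENNReal.tsum_le_tsum fun k => measure_biUnion_finset_le _ _))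
  _ = m / (2 * m + 1) := by
      simpa [sum_congr rfl fun p hp => measure_seqCylinder_staleList hiid hcard hunif hα a hp _ _,
        card_pairsThrough, hα] using tsum_staleList_mass m

end UniformScheduler

/-- Under a uniform random scheduler selecting i.i.d. uniformly random 2-element
subsets of `Fin n` at each step `t ≥ 1`, the probability that at a fixed agent `a`'s
first interaction its partner pair is disjoint from all earlier interaction pairs
equals `(n−1)/(2n−3) > 1/2`. -/
theorem stmt1 (n : ℕ) (hn : 2 ≤ n)
    {Ω : Type*} [MeasurableSpace Ω] (P : Measure Ω) [IsProbabilityMeasure P]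
    [MeasurableSpace (Finset (Fin n))] [MeasurableSingletonClass (Finset (Fin n))]
    (X : ℕ → Ω → Finset (Fin n))
    (hiid : iIndepFun X P)
    (hcard : ∀ t ω, (X t ω).card = 2)
    (hunif : ∀ t (s : Finset (Fin n)), s.card = 2 →
      P {ω | X t ω = s} = 1 / (n.choose 2 : ℝ≥0∞))
    (a : Fin n)
    (T : Ω → ℕ) (hT : ∀ ω, T ω = sInf {t | 1 ≤ t ∧ a ∈ X t ω}) :
    P {ω | (∃ t, 1 ≤ t ∧ a ∈ X t ω) ∧
        ∀ s, 1 ≤ s → s < T ω → X s ω ∩ X (T ω) ω = ∅} =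
      ((n : ℝ≥0∞) - 1) / (2 * (n : ℝ≥0∞) - 3) ∧
    ((n : ℝ≥0∞) - 1) / (2 * (n : ℝ≥0∞) - 3) > 1 / 2 := by
  obtain ⟨m, rfl⟩ : ∃ m, n = m + 2 := ⟨n - 2, by omega⟩
  obtain rfl : T = fun ω => firstVisit a (fun t => X t ω) := funext hT
  have hα : Fintype.card (Fin (m + 2)) = m + 2 := Fintype.card_fin _
  replace hunif : ∀ t (s : Finset (Fin (m + 2))), #s = 2 →
      P {ω | X t ω = s} = 1 / ((Fintype.card (Fin (m + 2))).choose 2 : ℝ≥0∞) := by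
    simpa only [Fintype.card_fin] using hunif
  rw [natCast_add_two_sub_one_div]
  exact ⟨measure_eq_of_le_of_compl_le (measure_firstPartnerFresh_le hiid hcard hunif hα a)
    (measure_compl_firstPartnerFresh_le hiid hcard hunif hα a) (succ_div_add_div_eq_one m),
    half_lt_succ_div m⟩
end

section
/- Let k ≥ 1 and n ≥ 1, let I : Ω → (ZMod k)ⁿ be a random vector with arbitrary distribution, let r : Ω → ZMod k be uniform and independent of I, define m_j = r + ∑_{x=1}^{j} I_x for 0 ≤ j ≤ n (so m_0 = r) and λ = ∑_{x=1}^{n} I_x. Then for every index j with 1 ≤ j ≤ n, every i*, m*, λ* ∈ ZMod k and every I* ∈ (ZMod k)ⁿ with P(I_j = i*, m_{j−1} = m*, λ = λ*) > 0, it holds that P(I = I* | I_j = i*, m_{j−1} = m*, λ = λ*) = P(I = I* | I_j = i*, λ = λ*). -/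
open MeasureTheory ProbabilityTheory
open scoped ENNReal

/-!
Whatever the inputs are, the message `m_{j-1} = r + ∑_{x<j} I_x` equals a prescribed value
exactly when the mask `r` equals a value determined by the inputs. Since `r` is uniform and
independent of `I`, this happens with probability `1/k` given any event on `I`, so
`P(I ∈ A, m_{j-1} = m*) = P(I ∈ A) / k` for every set `A` of input vectors, and the factor
`1/k` cancels in the conditional probability.
-/

namespace ProbabilityTheory.IndepFun

variable {Ω α β : Type*} {X : Ω → α} {r : Ω → β}

lemma setOf_mem_and_eq_comp_eq_biUnion (A : Set α) (g : α → β) :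
    {ω | X ω ∈ A ∧ r ω = g (X ω)} = ⋃ v ∈ A, X ⁻¹' {v} ∩ r ⁻¹' {g v} := by
  ext ω
  simp

variable [MeasurableSpace Ω] {P : Measure Ω}
  [MeasurableSpace α] [MeasurableSingletonClass α] [Countable α]
  [MeasurableSpace β] [MeasurableSingletonClass β] {c : ℝ≥0∞}

lemma measurableSet_mem_and_eq_comp (hX : Measurable X) (hr : Measurable r)
    (A : Set α) (g : α → β) : MeasurableSet {ω | X ω ∈ A ∧ r ω = g (X ω)} := by
  rw [setOf_mem_and_eq_comp_eq_biUnion]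
  exact .biUnion A.to_countable fun v _ =>
    (hX (measurableSet_singleton v)).inter (hr (measurableSet_singleton (g v)))

lemma measure_mem_and_eq_comp (hindep : IndepFun r X P) (hX : Measurable X)
    (hr : Measurable r) (hunif : ∀ b, P {ω | r ω = b} = c) (A : Set α) (g : α → β) :
    P {ω | X ω ∈ A ∧ r ω = g (X ω)} = c * P (X ⁻¹' A) := by
  have hfiber (v : α) : P (X ⁻¹' {v} ∩ r ⁻¹' {g v}) = c * P (X ⁻¹' {v}) := by
    rw [Set.inter_comm, hindep.measure_inter_preimage_eq_mul _ _
      (measurableSet_singleton _) (measurableSet_singleton _)]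
    exact congrArg (· * _) (hunif (g v))
  rw [setOf_mem_and_eq_comp_eq_biUnion,
    measure_biUnion A.to_countable
      ((Set.pairwiseDisjoint_fiber X A).mono fun v => Set.inter_subset_left)
      fun v _ => (hX (measurableSet_singleton v)).inter (hr (measurableSet_singleton (g v))),
    ← tsum_measure_preimage_singleton A.to_countable fun v _ => hX (measurableSet_singleton v),
    ← ENNReal.tsum_mul_left]
  exact tsum_congr fun v => hfiber v

lemma cond_mem_and_eq_comp [IsFiniteMeasure P] [Nonempty β] (hindep : IndepFun r X P)
    (hX : Measurable X) (hr : Measurable r) (hunif : ∀ b, P {ω | r ω = b} = c)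
    (hc : c ≠ 0) (A B : Set α) (g : α → β) :
    P[X ⁻¹' B | {ω | X ω ∈ A ∧ r ω = g (X ω)}] = P[X ⁻¹' B | X ⁻¹' A] := by
  have hc_top : c ≠ ∞ := hunif (Classical.arbitrary β) ▸ measure_ne_top P _
  have hinter : {ω | X ω ∈ A ∧ r ω = g (X ω)} ∩ X ⁻¹' B = {ω | X ω ∈ A ∩ B ∧ r ω = g (X ω)} :=
    Set.ext fun _ => and_right_comm
  rw [cond_apply (measurableSet_mem_and_eq_comp hX hr A g),
    cond_apply (hX A.to_countable.measurableSet), hinter,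
    hindep.measure_mem_and_eq_comp hX hr hunif, hindep.measure_mem_and_eq_comp hX hr hunif,
    ENNReal.mul_inv (.inl hc) (.inl hc_top), mul_mul_mul_comm, ENNReal.inv_mul_cancel hc hc_top,
    one_mul, Set.preimage_inter]

end ProbabilityTheory.IndepFun

theorem stmt4_general (k n : ℕ) (hk : 1 ≤ k)
    {Ω : Type*} [MeasurableSpace Ω] (P : Measure Ω) [IsProbabilityMeasure P]
    [MeasurableSpace (ZMod k)] [MeasurableSingletonClass (ZMod k)]
    [MeasurableSpace (Fin n → ZMod k)] [MeasurableSingletonClass (Fin n → ZMod k)]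
    (I : Ω → Fin n → ZMod k) (hI : Measurable I)
    (r : Ω → ZMod k) (hr : Measurable r)
    (hunif : ∀ z : ZMod k, P {ω | r ω = z} = 1 / (k : ℝ≥0∞))
    (hindep : IndepFun r I P)
    (j : Fin n) (istar mstar lstar : ZMod k) (Istar : Fin n → ZMod k) :
    P[{ω | I ω = Istar} | {ω | I ω j = istar ∧
        r ω + ∑ x ∈ Finset.univ.filter (fun x : Fin n => (x : ℕ) < (j : ℕ)), I ω x = mstar ∧
        (∑ x : Fin n, I ω x) = lstar}] =
    P[{ω | I ω = Istar} | {ω | I ω j = istar ∧ (∑ x : Fin n, I ω x) = lstar}] := by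
  have : NeZero k := ⟨by omega⟩
  let A : Set (Fin n → ZMod k) := {v | v j = istar ∧ ∑ x, v x = lstar}
  let mask (v : Fin n → ZMod k) : ZMod k :=
    mstar - ∑ x ∈ Finset.univ.filter (fun x : Fin n => (x : ℕ) < (j : ℕ)), v x
  have hview : {ω | I ω j = istar ∧
      r ω + ∑ x ∈ Finset.univ.filter (fun x : Fin n => (x : ℕ) < (j : ℕ)), I ω x = mstar ∧
      (∑ x : Fin n, I ω x) = lstar} = {ω | I ω ∈ A ∧ r ω = mask (I ω)} := by
    ext ω
    simp only [Set.mem_ofPred_eq, A, mask, eq_sub_iff_add_eq]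
    tauto
  rw [hview]
  exact hindep.cond_mem_and_eq_comp hI hr hunif (by simp) A {Istar} mask

/-- Information-theoretic privacy of RingRemainder: given agent `A_j`'s own input
`I_j`, the message `m_{j−1} = r + ∑_{x=1}^{j−1} I_x` it receives, and the output
`λ = ∑_{x=1}^{n} I_x`, conditioning additionally on the received message does not
change the conditional probability of any input vector. -/
theorem stmt4 (k n : ℕ) (hk : 1 ≤ k) (hn : 1 ≤ n)
    {Ω : Type*} [MeasurableSpace Ω] (P : Measure Ω) [IsProbabilityMeasure P]
    [MeasurableSpace (ZMod k)] [MeasurableSingletonClass (ZMod k)]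
    [MeasurableSpace (Fin n → ZMod k)] [MeasurableSingletonClass (Fin n → ZMod k)]
    (I : Ω → Fin n → ZMod k) (hI : Measurable I)
    (r : Ω → ZMod k) (hr : Measurable r)
    (hunif : ∀ z : ZMod k, P {ω | r ω = z} = 1 / (k : ℝ≥0∞))
    (hindep : IndepFun r I P)
    (j : Fin n) (istar mstar lstar : ZMod k) (Istar : Fin n → ZMod k)
    (hpos : P {ω | I ω j = istar ∧
        r ω + ∑ x ∈ Finset.univ.filter (fun x : Fin n => (x : ℕ) < (j : ℕ)), I ω x = mstar ∧
        (∑ x : Fin n, I ω x) = lstar} ≠ 0) :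
    P[{ω | I ω = Istar} | {ω | I ω j = istar ∧
        r ω + ∑ x ∈ Finset.univ.filter (fun x : Fin n => (x : ℕ) < (j : ℕ)), I ω x = mstar ∧
        (∑ x : Fin n, I ω x) = lstar}] =
    P[{ω | I ω = Istar} | {ω | I ω j = istar ∧ (∑ x : Fin n, I ω x) = lstar}] :=
  stmt4_general k n hk P I hI r hr hunif hindep j istar mstar lstar Istar
end
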